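/- Let 0 < a < 1/2, τ > 0, and f(v) = v(v − a)(1 − v). There exists c₀ > 0 such that for every c with 0 < c < c₀ and τc² < 1, setting β = 1/(1 − τc²): every maximal solution (v, u) of the planar system v' = u, u' = β(cu − f(v)) on an interval with right endpoint ω ∈ (0, +∞] that satisfies (v(ξ), u(ξ)) → (0, 0) as ξ → −∞ and u(ξ) > 0 for all sufficiently negative ξ, satisfies v(ξ) → −∞ and u(ξ) → −∞ as ξ → ω. -/

import Mathlib

open Filter

/-- The planar traveling-wave system (ε = 0, w = 0):
v' = u, u' = β(cu − f(v)), f(v) = v(v−a)(1−v), on the interval (−∞, ω). -/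
def IsPlanarSol (a β c : ℝ) (v u : ℝ → ℝ) (ω : EReal) : Prop :=
  ∀ ξ : ℝ, (ξ : EReal) < ω →
    HasDerivAt v (u ξ) ξ ∧
    HasDerivAt u (β * (c * u ξ - v ξ * (v ξ - a) * (1 - v ξ))) ξ

/-- Maximality: any solution extending (v, u) beyond ω does not exist. -/
def IsPlanarMaximal (a β c : ℝ) (v u : ℝ → ℝ) (ω : EReal) : Prop :=
  ∀ (v' u' : ℝ → ℝ) (ω' : EReal), IsPlanarSol a β c v' u' ω' →
    (∀ ξ : ℝ, (ξ : EReal) < ω → v' ξ = v ξ ∧ u' ξ = u ξ) → ω' ≤ ω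

/-- The filter of approach to the right endpoint ω ∈ (0, +∞] from the left,
as a filter on ℝ (equal to atTop when ω = ⊤, and to 𝓝[<] ω₀ when ω = ω₀ ∈ ℝ). -/
noncomputable def approachFromLeft (ω : EReal) : Filter ℝ :=
  Filter.comap (fun ξ : ℝ => (ξ : EReal)) (nhdsWithin ω (Set.Iio ω))

/-!
The energy `E = u ^ 2 / 2 + β F(v)`, with `F' = f`, satisfies `E' = β c u ^ 2 ≥ 0` and tends to
`0` at `-∞`. While `u ≥ 0` the function `E - 4 β c v` decreases, so `E ≤ 4 β c v`, and for small
`c` this traps the orbit in `0 ≤ v < 1`, `0 ≤ u < 4`. A maximal solution with bounded `v` lives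
for all time, and an orbit with `u > 0` forever is impossible, so `u` has a first zero `ξs`, where
`E = β F(v) > 0` forces `a < v < 1`. There the orbit crosses into `u < 0` and never comes back,
because along `u < 0` the value of `v` decreases and `E` increases, so a second zero would again
be a downward crossing. The energy gained after `ξs` keeps `u ≤ -δ`; hence `v → -∞` (a lower bound
on `v` would give an infinite lifetime and then a linear decrease). Finally, once `v ≤ -1` we have
`u' ≤ -2 β`, and `u → -∞`.
-/

open Set Topology Metric

section RealCalculus

variable {D : Set ℝ} {f f' : ℝ → ℝ}

lemma monotoneOn_of_hasDerivAt_nonneg (hD : Convex ℝ D) (hf : ∀ x ∈ D, HasDerivAt f (f' x) x)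
    (hf' : ∀ x ∈ interior D, 0 ≤ f' x) : MonotoneOn f D :=
  monotoneOn_of_hasDerivWithinAt_nonneg hD (HasDerivAt.continuousOn hf)
    (fun x hx => (hf x (interior_subset hx)).hasDerivWithinAt) hf'

lemma antitoneOn_of_hasDerivAt_nonpos (hD : Convex ℝ D) (hf : ∀ x ∈ D, HasDerivAt f (f' x) x)
    (hf' : ∀ x ∈ interior D, f' x ≤ 0) : AntitoneOn f D :=
  antitoneOn_of_hasDerivWithinAt_nonpos hD (HasDerivAt.continuousOn hf)
    (fun x hx => (hf x (interior_subset hx)).hasDerivWithinAt) hf'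

lemma strictMonoOn_of_hasDerivAt_pos (hD : Convex ℝ D) (hf : ∀ x ∈ D, HasDerivAt f (f' x) x)
    (hf' : ∀ x ∈ interior D, 0 < f' x) : StrictMonoOn f D :=
  strictMonoOn_of_hasDerivWithinAt_pos hD (HasDerivAt.continuousOn hf)
    (fun x hx => (hf x (interior_subset hx)).hasDerivWithinAt) hf'

lemma image_sub_le_mul_sub_of_hasDerivAt_le (hD : Convex ℝ D)
    (hf : ∀ x ∈ D, HasDerivAt f (f' x) x) {C : ℝ} (hf' : ∀ x ∈ interior D, f' x ≤ C)
    {x y : ℝ} (hx : x ∈ D) (hy : y ∈ D) (hxy : x ≤ y) : f y - f x ≤ C * (y - x) :=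
  hD.image_sub_le_mul_sub_of_deriv_le (HasDerivAt.continuousOn hf)
    (fun z hz => (hf z (interior_subset hz)).differentiableAt.differentiableWithinAt)
    (fun z hz => (hf z (interior_subset hz)).deriv ▸ hf' z hz) x hx y hy hxy

lemma mul_sub_le_image_sub_of_le_hasDerivAt (hD : Convex ℝ D)
    (hf : ∀ x ∈ D, HasDerivAt f (f' x) x) {C : ℝ} (hf' : ∀ x ∈ interior D, C ≤ f' x)
    {x y : ℝ} (hx : x ∈ D) (hy : y ∈ D) (hxy : x ≤ y) : C * (y - x) ≤ f y - f x :=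
  hD.mul_sub_le_image_sub_of_le_deriv (HasDerivAt.continuousOn hf)
    (fun z hz => (hf z (interior_subset hz)).differentiableAt.differentiableWithinAt)
    (fun z hz => (hf z (interior_subset hz)).deriv ▸ hf' z hz) x hx y hy hxy

lemma exists_lt_of_hasDerivAt_le_neg {s κ : ℝ} (hκ : 0 < κ)
    (hf : ∀ x, s ≤ x → HasDerivAt f (f' x) x) (hf' : ∀ x, s ≤ x → f' x ≤ -κ) (B : ℝ) :
    ∃ x, s ≤ x ∧ f x < B := by
  set x := s + |f s - B| / κ + 1
  have hsx : s ≤ x := by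
    have : 0 ≤ |f s - B| / κ := by positivity
    linarith
  refine ⟨x, hsx, ?_⟩
  have h := image_sub_le_mul_sub_of_hasDerivAt_le (convex_Ici s) (fun y hy => hf y hy)
    (fun y hy => hf' y (interior_subset hy)) self_mem_Ici (show x ∈ Ici s from hsx) hsx
  have : κ * (x - s) = |f s - B| + κ := by simp only [x]; field_simp; ring
  linarith [le_abs_self (f s - B)]

lemma exists_first_zero {g : ℝ → ℝ} {s t : ℝ} (hst : s ≤ t) (hg : ContinuousOn g (Icc s t))
    (hs : 0 < g s) (ht : g t ≤ 0) : ∃ x ∈ Ioc s t, g x = 0 ∧ ∀ y ∈ Ico s x, 0 < g y := by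
  set S := Icc s t ∩ g ⁻¹' Iic 0
  have hbdd : BddBelow S := ⟨s, fun y hy => hy.1.1⟩
  obtain ⟨⟨hsx, hxt⟩, hx0⟩ : sInf S ∈ S :=
    (hg.preimage_isClosed_of_isClosed isClosed_Icc isClosed_Iic).csInf_mem
      ⟨t, ⟨hst, le_rfl⟩, ht⟩ hbdd
  have before : ∀ y ∈ Ico s (sInf S), 0 < g y := fun y hy => lt_of_not_ge fun hy0 =>
    hy.2.not_ge (csInf_le hbdd ⟨⟨hy.1, hy.2.le.trans hxt⟩, hy0⟩)
  obtain ⟨z, hz, hz0⟩ :=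
    intermediate_value_Icc' hsx (hg.mono (Icc_subset_Icc_right hxt)) ⟨hx0, hs.le⟩
  have hzx : z = sInf S := hz.2.eq_of_not_lt fun hlt => (before z ⟨hz.1, hlt⟩).ne' hz0
  rw [hzx] at hz0
  exact ⟨sInf S, ⟨hsx.lt_of_ne (by rintro h; rw [← h] at hz0; exact hs.ne' hz0), hxt⟩, hz0, before⟩

lemma HasDerivAt.eventually_pos_left_neg_right {g : ℝ → ℝ} {d x : ℝ} (hg : HasDerivAt g d x)
    (hd : d < 0) (hx : g x = 0) : (∀ᶠ y in 𝓝[<] x, 0 < g y) ∧ ∀ᶠ y in 𝓝[>] x, g y < 0 := by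
  have hsign := eventually_nhdsWithin_sign_eq_of_deriv_neg (hg.deriv ▸ hd) hx
  constructor
  · filter_upwards [nhdsWithin_le_nhds hsign, self_mem_nhdsWithin] with y hy (hyx : y < x)
    rwa [sign_pos (sub_pos.2 hyx), sign_eq_one_iff] at hy
  · filter_upwards [nhdsWithin_le_nhds hsign, self_mem_nhdsWithin] with y hy (hxy : x < y)
    rwa [sign_neg (sub_neg.2 hxy), sign_eq_neg_one_iff] at hy

lemma neg_of_hasDerivAt_neg_at_zeros {g g' : ℝ → ℝ} {s t : ℝ}
    (hg : ∀ x ∈ Icc s t, HasDerivAt g (g' x) x) (hs : g s = 0)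
    (hz : ∀ x ∈ Icc s t, g x = 0 → (∀ y ∈ Ioo s x, g y < 0) → g' x < 0) :
    ∀ x ∈ Ioc s t, g x < 0 := by
  rintro x ⟨hsx, hxt⟩
  obtain ⟨p, hsp, hp⟩ := (nhdsGT_basis s).eventually_iff.1
    ((hg s ⟨le_rfl, hsx.le.trans hxt⟩).eventually_pos_left_neg_right
      (hz s ⟨le_rfl, hsx.le.trans hxt⟩ hs (by simp)) hs).2
  by_contra! hx
  have hpx : p ≤ x := le_of_not_gt fun hxp => (hp ⟨hsx, hxp⟩).not_ge hx
  obtain ⟨q, hsq, hqp⟩ := exists_between hsp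
  have hq : g q < 0 := hp ⟨hsq, hqp⟩
  obtain ⟨z, ⟨hqz, hzx⟩, hz0, hbefore⟩ := exists_first_zero (g := fun y => -g y) (s := q) (t := x)
    (by linarith) (HasDerivAt.continuousOn fun y hy =>
      (hg y ⟨by linarith [hy.1], hy.2.trans hxt⟩).neg) (by simpa using hq) (by simpa using hx)
  have hneg : ∀ y ∈ Ioo s z, g y < 0 := fun y hy => by
    rcases lt_or_ge y p with hyp | hyp
    · exact hp ⟨hy.1, hyp⟩
    · simpa using hbefore y ⟨by linarith, hy.2⟩
  have hzmem : z ∈ Icc s t := ⟨by linarith, hzx.trans hxt⟩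
  have hz0' : g z = 0 := neg_eq_zero.1 hz0
  obtain ⟨y, hy1, hy2⟩ := (((hg z hzmem).eventually_pos_left_neg_right
    (hz z hzmem hz0' hneg) hz0').1.and (Ioo_mem_nhdsLT (by linarith : s < z))).exists
  exact (hneg y hy2).not_gt hy1

end RealCalculus

section Extension

variable {E : Type*} [NormedAddCommGroup E] [NormedSpace ℝ E]

lemma mem_closedBall_of_hasDerivWithinAt {Φ : E → E} {α : ℝ → E} {p : E} {s t ρ L : ℝ}
    (hα : ∀ τ ∈ Icc s t, HasDerivWithinAt α (Φ (α τ)) (Icc s t) τ) (hαs : α s = p)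
    (hρ : 0 ≤ ρ) (hΦ : ∀ q ∈ closedBall p ρ, ‖Φ q‖ < L) (hL : L * (t - s) ≤ ρ) :
    ∀ τ ∈ Icc s t, α τ ∈ closedBall p ρ := by
  have hL0 : 0 ≤ L := (norm_nonneg _).trans (hΦ p (mem_closedBall_self hρ)).le
  have hbound : ∀ τ ∈ Icc s t, ‖α τ - p‖ ≤ L * (τ - s) :=
    image_norm_le_of_norm_deriv_right_lt_deriv_boundary (B' := fun _ => L)
      (fun τ hτ => (hα τ hτ).continuousWithinAt.sub continuousWithinAt_const)
      (fun τ hτ => ((hα τ (Ico_subset_Icc_self hτ)).sub_const p).mono_of_mem_nhdsWithin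
        (Icc_mem_nhdsGE_of_mem hτ))
      (by simp [hαs])
      (fun τ => ((hasDerivAt_id τ).sub_const s).const_mul L |>.congr_deriv (mul_one L))
      (fun τ hτ heq => hΦ _ (by
        rw [mem_closedBall_iff_norm, show ‖α τ - p‖ = L * (τ - s) from heq]
        exact le_trans (mul_le_mul_of_nonneg_left (by linarith [hτ.2]) hL0) hL))
  exact fun τ hτ => mem_closedBall_iff_norm.2 <|
    (hbound τ hτ).trans (le_trans (mul_le_mul_of_nonneg_left (by linarith [hτ.2]) hL0) hL)

lemma exists_forall_mem_closedBall_solution [ProperSpace E] {Φ : E → E}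
    (hΦ : LocallyLipschitz Φ) (R : ℝ) :
    ∃ ε > 0, ∀ (σ : ℝ), ∀ p ∈ closedBall (0 : E) R, ∃ α : ℝ → E, α σ = p ∧
      ∀ t ∈ Icc σ (σ + ε), HasDerivWithinAt α (Φ (α t)) (Icc σ (σ + ε)) t ∧
        α t ∈ closedBall (0 : E) (R + 1) := by
  obtain ⟨K, hK⟩ := hΦ.locallyLipschitzOn.exists_lipschitzOnWith_of_compact
    (isCompact_closedBall (0 : E) (R + 1))
  obtain ⟨C, hC⟩ := (isCompact_closedBall (0 : E) (R + 1)).exists_bound_of_continuousOn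
    hΦ.continuous.continuousOn
  set L := C.toNNReal
  have hΦL : ∀ q ∈ closedBall (0 : E) (R + 1), ‖Φ q‖ ≤ L :=
    fun q hq => (hC q hq).trans (Real.le_coe_toNNReal C)
  have hε : 0 < 1 / ((L : ℝ) + 1) := by positivity
  refine ⟨1 / (L + 1), hε, fun σ p hp => ?_⟩
  have hball : closedBall p 1 ⊆ closedBall (0 : E) (R + 1) := fun q hq => by
    rw [mem_closedBall_zero_iff]
    linarith [norm_le_norm_add_norm_sub' q p, mem_closedBall_zero_iff.1 hp,
      mem_closedBall_iff_norm.1 hq]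
  have hPL : IsPicardLindelof (fun _ => Φ) (tmin := σ) (tmax := σ + 1 / (L + 1))
      ⟨σ, left_mem_Icc.2 (by linarith)⟩ p 1 0 L K :=
    IsPicardLindelof.of_time_independent (fun q hq => hΦL q (hball (by simpa using hq)))
      (hK.mono (by simpa using hball)) (by
        simp only [add_sub_cancel_left, sub_self, NNReal.coe_one, NNReal.coe_zero, sub_zero]
        rw [max_eq_left hε.le, mul_one_div, div_le_one (by positivity)]
        linarith)
  obtain ⟨α, hασ, hα⟩ := hPL.exists_eq_forall_mem_Icc_hasDerivWithinAt₀
  refine ⟨α, hασ, fun t ht => ⟨hα t ht, hball ?_⟩⟩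
  exact mem_closedBall_of_hasDerivWithinAt hα hασ zero_le_one
    (fun q hq => (hΦL q (hball hq)).trans_lt (lt_add_one _))
    (by rw [add_sub_cancel_left, mul_one_div_cancel (by positivity)]) t ht

lemma hasDerivAt_ite_of_eqOn {Φ : E → E} {x α : ℝ → E} {σ t₀ t₁ : ℝ}
    (hx : ∀ t < t₀, HasDerivAt x (Φ (x t)) t) (hα : ∀ t ∈ Ioo σ t₁, HasDerivAt α (Φ (α t)) t)
    (heq : EqOn x α (Ioo σ t₀)) (hσ : σ < t₀) {t : ℝ} (ht : t < t₁) :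
    HasDerivAt (fun t => if t < t₀ then x t else α t)
      (Φ (if t < t₀ then x t else α t)) t := by
  have hyα : EqOn (fun t => if t < t₀ then x t else α t) α (Ioo σ t₁) := fun r hr => by
    by_cases h : r < t₀
    · simp only [if_pos h]; exact heq ⟨hr.1, h⟩
    · exact if_neg h
  by_cases h : t < t₀
  · simp only [if_pos h]
    exact (hx t h).congr_of_eventuallyEq
      (eventually_of_mem (Iio_mem_nhds h) fun r hr => if_pos hr)
  · have ht' : t ∈ Ioo σ t₁ := ⟨by linarith [not_lt.1 h], ht⟩
    simp only [if_neg h]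
    exact (hα t ht').congr_of_eventuallyEq (eventually_of_mem (Ioo_mem_nhds ht'.1 ht'.2) hyα)

/-- Started from `x σ` with `σ` close enough to `t₀`, the uniform-time local solution reaches
past `t₀`, and by uniqueness it continues `x`. -/
theorem exists_extension_of_norm_le [ProperSpace E] {Φ : E → E} (hΦ : LocallyLipschitz Φ)
    {x : ℝ → E} {s t₀ R : ℝ} (hst : s < t₀) (hx : ∀ t < t₀, HasDerivAt x (Φ (x t)) t)
    (hR : ∀ t ∈ Ico s t₀, ‖x t‖ ≤ R) :
    ∃ y : ℝ → E, ∃ t₁ > t₀, (∀ t < t₀, y t = x t) ∧ ∀ t < t₁, HasDerivAt y (Φ (y t)) t := by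
  obtain ⟨ε, hε, hsol⟩ := exists_forall_mem_closedBall_solution hΦ R
  obtain ⟨K, hK⟩ := hΦ.locallyLipschitzOn.exists_lipschitzOnWith_of_compact
    (isCompact_closedBall (0 : E) (R + 1))
  set σ := max s (t₀ - ε / 2)
  have hsσ : s ≤ σ := le_max_left _ _
  have hσt₀ : σ < t₀ := max_lt hst (by linarith)
  have ht₀σ : t₀ < σ + ε := by linarith [le_max_right s (t₀ - ε / 2)]
  obtain ⟨α, hασ, hα⟩ := hsol σ (x σ) (mem_closedBall_zero_iff.2 (hR σ ⟨hsσ, hσt₀⟩))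
  have hxα : EqOn x α (Ioo σ t₀) := fun t ht =>
    ODE_solution_unique_of_mem_Icc_right (v := fun _ => Φ) (s := fun _ => closedBall 0 (R + 1))
      (fun _ _ => hK) (HasDerivAt.continuousOn fun τ hτ => hx τ (hτ.2.trans_lt ht.2))
      (fun τ hτ => (hx τ (hτ.2.trans ht.2)).hasDerivWithinAt)
      (fun τ hτ => mem_closedBall_zero_iff.2 <|
        (hR τ ⟨hsσ.trans hτ.1, hτ.2.trans ht.2⟩).trans (by linarith))
      (fun τ hτ => (hα τ ⟨hτ.1, by linarith [hτ.2, ht.2]⟩).1.continuousWithinAt.mono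
        (Icc_subset_Icc_right (by linarith [ht.2])))
      (fun τ hτ => (hα τ ⟨hτ.1, by linarith [hτ.2, ht.2]⟩).1.mono_of_mem_nhdsWithin
        (Icc_mem_nhdsGE_of_mem ⟨hτ.1, by linarith [hτ.2, ht.2]⟩))
      (fun τ hτ => (hα τ ⟨hτ.1, by linarith [hτ.2, ht.2]⟩).2) hασ.symm ⟨ht.1.le, le_rfl⟩
  exact ⟨_, σ + ε, ht₀σ, fun t ht => if_pos ht, fun t ht => hasDerivAt_ite_of_eqOn hx
    (fun τ hτ => (hα τ (Ioo_subset_Icc_self hτ)).1.hasDerivAt (Icc_mem_nhds hτ.1 hτ.2))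
    hxα hσt₀ ht⟩

end Extension

noncomputable def cubicPotential (a x : ℝ) : ℝ := -x ^ 4 / 4 + (1 + a) * x ^ 3 / 3 - a * x ^ 2 / 2

section CubicPotential

variable {a x y : ℝ}

lemma hasDerivAt_cubicPotential (a x : ℝ) :
    HasDerivAt (cubicPotential a) (x * (x - a) * (1 - x)) x := by
  unfold cubicPotential
  exact ((((hasDerivAt_pow 4 x).neg.div_const 4).add
    (((hasDerivAt_pow 3 x).const_mul (1 + a)).div_const 3)).sub
    (((hasDerivAt_pow 2 x).const_mul a).div_const 2)).congr_deriv (by push_cast; ring)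

lemma continuous_cubicPotential (a : ℝ) : Continuous (cubicPotential a) := by
  unfold cubicPotential; fun_prop

@[simp] lemma cubicPotential_zero : cubicPotential a 0 = 0 := by simp [cubicPotential]

lemma cubicPotential_one : cubicPotential a 1 = (1 - 2 * a) / 12 := by
  unfold cubicPotential; ring

lemma cubicPotential_nonpos (ha0 : 0 ≤ a) (ha1 : a ≤ 1) (hx : x ≤ a) : cubicPotential a x ≤ 0 := by
  unfold cubicPotential
  have hq : 0 ≤ x ^ 2 / 4 - (1 + a) * x / 3 + a / 2 := by
    nlinarith [mul_nonneg (sub_nonneg.2 hx) (by linarith : 0 ≤ (1 + a) / 3 - (x + a) / 4)]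
  nlinarith [mul_nonneg (sq_nonneg x) hq]

lemma neg_one_le_cubicPotential (ha0 : 0 ≤ a) (ha1 : a ≤ 1) (hx0 : 0 ≤ x) (hx1 : x ≤ 1) :
    -1 ≤ cubicPotential a x := by
  unfold cubicPotential
  nlinarith [pow_le_one₀ hx0 hx1 (n := 4),
    mul_nonneg (add_nonneg zero_le_one ha0) (pow_nonneg hx0 3),
    mul_le_one₀ ha1 (sq_nonneg x) (pow_le_one₀ hx0 hx1)]

lemma cubicPotential_one_sub_le (ha0 : 0 ≤ a) (hx0 : 0 ≤ x) (hx1 : x ≤ 1) :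
    cubicPotential a 1 - cubicPotential a x ≤ 1 - x := by
  unfold cubicPotential
  have h := sub_nonneg.2 hx1
  nlinarith [mul_nonneg (mul_nonneg hx0 hx0) h, mul_nonneg (mul_nonneg (mul_nonneg hx0 hx0) hx0) h,
    mul_nonneg ha0 (mul_nonneg hx0 h), mul_nonneg ha0 h, mul_nonneg hx0 h]

lemma cubicPotential_le_of_le (ha0 : 0 ≤ a) (ha1 : a ≤ 1) (hxy : x ≤ y) (hy1 : y ≤ 1)
    (hFy : 0 ≤ cubicPotential a y) : cubicPotential a x ≤ cubicPotential a y := by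
  rcases le_or_gt x a with h | h
  · exact (cubicPotential_nonpos ha0 ha1 h).trans hFy
  · refine monotoneOn_of_hasDerivAt_nonneg (convex_Icc a 1)
      (fun z _ => hasDerivAt_cubicPotential a z) (fun z hz => ?_)
      ⟨h.le, hxy.trans hy1⟩ ⟨h.le.trans hxy, hy1⟩ hxy
    rw [interior_Icc] at hz
    exact mul_nonneg (mul_nonneg (by linarith [hz.1]) (by linarith [hz.1])) (by linarith [hz.2])

lemma two_le_cubic (ha0 : 0 ≤ a) (hx : x ≤ -1) : 2 ≤ x * (x - a) * (1 - x) := by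
  have h : 1 ≤ x * (x - a) := by nlinarith
  nlinarith

end CubicPotential

def existenceInterval (ω : EReal) : Set ℝ := {ξ : ℝ | (ξ : EReal) < ω}

section ExistenceInterval

variable {ω : EReal} {η ξ : ℝ}

lemma mem_existenceInterval_of_le (hξ : ξ ∈ existenceInterval ω) (h : η ≤ ξ) :
    η ∈ existenceInterval ω :=
  (EReal.coe_le_coe_iff.2 h).trans_lt hξ

lemma convex_existenceInterval : Convex ℝ (existenceInterval ω) :=
  (Set.OrdConnected.mk fun _ _ _ hy _ hz => mem_existenceInterval_of_le hy hz.2).convex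

lemma tendsto_approachFromLeft_atBot_of_antitoneOn {g : ℝ → ℝ} {s : ℝ}
    (hg : AntitoneOn g (existenceInterval ω ∩ Ici s))
    (h : ∀ B, ∃ ξ ∈ existenceInterval ω, s ≤ ξ ∧ g ξ ≤ B) :
    Tendsto g (approachFromLeft ω) atBot := by
  refine tendsto_atBot.2 fun B => ?_
  obtain ⟨ξ, hξω, hsξ, hB⟩ := h B
  filter_upwards [preimage_mem_comap (Ioo_mem_nhdsLT hξω)] with η ⟨hξη, hηω⟩
  have hξη : ξ ≤ η := EReal.coe_le_coe_iff.1 hξη.le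
  exact (hg ⟨hξω, hsξ⟩ ⟨hηω, hsξ.trans hξη⟩ hξη).trans hB

end ExistenceInterval

def planarField (a β c : ℝ) (p : ℝ × ℝ) : ℝ × ℝ :=
  (p.2, β * (c * p.2 - p.1 * (p.1 - a) * (1 - p.1)))

section PlanarSystem

variable {a β c : ℝ} {v u : ℝ → ℝ} {ω : EReal}

lemma contDiff_planarField : ContDiff ℝ 1 (planarField a β c) := by
  unfold planarField; fun_prop

lemma isPlanarSol_iff_hasDerivAt : IsPlanarSol a β c v u ω ↔
    ∀ ξ : ℝ, (ξ : EReal) < ω → HasDerivAt (fun t => (v t, u t)) (planarField a β c (v ξ, u ξ)) ξ :=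
  ⟨fun hs ξ hξ => (hs ξ hξ).1.prodMk (hs ξ hξ).2, fun h ξ hξ =>
    ⟨(hasFDerivAt_fst.comp_hasDerivAt ξ (h ξ hξ) :),
      (hasFDerivAt_snd.comp_hasDerivAt ξ (h ξ hξ) :)⟩⟩

lemma IsPlanarSol.exists_abs_u_le {ω₀ s R : ℝ} (hs : IsPlanarSol a β c v u ω₀)
    (hR : ∀ ξ ∈ Ico s ω₀, |v ξ| ≤ R) : ∃ U, ∀ ξ ∈ Ico s ω₀, |u ξ| ≤ U := by
  obtain ⟨C, hC⟩ := (isCompact_Icc (a := -R) (b := R)).exists_bound_of_continuousOn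
    (f := fun x : ℝ => x * (x - a) * (1 - x)) (by fun_prop)
  have hlt : ∀ t, t < ω₀ → (t : EReal) < ω₀ := fun t => EReal.coe_lt_coe_iff.2
  refine ⟨gronwallBound |u s| |β * c| (|β| * C) (ω₀ - s), fun ξ hξ => ?_⟩
  have hC0 : 0 ≤ C := (norm_nonneg _).trans
    (hC 0 (abs_le.1 (by simpa using (abs_nonneg _).trans (hR s ⟨le_rfl, hξ.1.trans_lt hξ.2⟩))))
  refine (norm_le_gronwallBound_of_norm_deriv_right_le (f := u) (b := ξ)
    (HasDerivAt.continuousOn fun t ht => (hs t (hlt t (ht.2.trans_lt hξ.2))).2)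
    (fun t ht => (hs t (hlt t (ht.2.trans hξ.2))).2.hasDerivWithinAt) le_rfl
    (fun t ht => ?_) ξ ⟨hξ.1, le_rfl⟩).trans
    (gronwallBound_mono (abs_nonneg _) (by positivity) (abs_nonneg _) (by linarith [hξ.2]))
  have hf := hC _ (abs_le.1 (hR t ⟨ht.1, ht.2.trans hξ.2⟩))
  simp only [Real.norm_eq_abs] at hf ⊢
  calc |β * (c * u t - v t * (v t - a) * (1 - v t))|
      = |β| * |c * u t - v t * (v t - a) * (1 - v t)| := abs_mul _ _
    _ ≤ |β| * (|c| * |u t| + C) := by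
      gcongr
      exact (abs_sub _ _).trans (by rw [abs_mul]; linarith)
    _ = |β * c| * |u t| + |β| * C := by rw [abs_mul]; ring

/-- A bounded `v` gives, through the linear differential inequality for `u`, a bounded solution,
which could be extended past a finite endpoint. -/
theorem IsPlanarMaximal.eq_top_of_abs_le (hs : IsPlanarSol a β c v u ω)
    (hm : IsPlanarMaximal a β c v u ω) {s R : ℝ} (hsω : s ∈ existenceInterval ω)
    (hR : ∀ ξ ∈ existenceInterval ω, s ≤ ξ → |v ξ| ≤ R) : ω = ⊤ := by
  by_contra hT
  obtain ⟨ω₀, rfl⟩ : ∃ ω₀ : ℝ, ω = ω₀ :=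
    ⟨ω.toReal, (EReal.coe_toReal hT (ne_bot_of_gt (hsω : (s : EReal) < ω))).symm⟩
  have hlt : ∀ t, t < ω₀ → t ∈ existenceInterval ω₀ := fun t => EReal.coe_lt_coe_iff.2
  have hR' : ∀ t ∈ Ico s ω₀, |v t| ≤ R := fun t ht => hR t (hlt t ht.2) ht.1
  obtain ⟨U, hU⟩ := hs.exists_abs_u_le hR'
  obtain ⟨y, t₁, ht₁, hyx, hy⟩ := exists_extension_of_norm_le
    contDiff_planarField.locallyLipschitz (EReal.coe_lt_coe_iff.1 hsω)
    (fun t ht => isPlanarSol_iff_hasDerivAt.1 hs t (hlt t ht)) (R := max R U)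
    fun t ht => norm_prod_le_iff.2
      ⟨(hR' t ht).trans (le_max_left _ _), (hU t ht).trans (le_max_right _ _)⟩
  have hle := hm (fun t => (y t).1) (fun t => (y t).2) t₁
    (isPlanarSol_iff_hasDerivAt.2 fun ξ hξ => hy ξ (EReal.coe_lt_coe_iff.1 hξ))
    fun ξ hξ => by simp [hyx ξ (EReal.coe_lt_coe_iff.1 hξ)]
  exact ht₁.not_ge (EReal.coe_le_coe_iff.1 hle)

end PlanarSystem

noncomputable def energy (a β : ℝ) (v u : ℝ → ℝ) (ξ : ℝ) : ℝ :=
  u ξ ^ 2 / 2 + β * cubicPotential a (v ξ)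

namespace IsPlanarSol

variable {a β c : ℝ} {v u : ℝ → ℝ} {ω : EReal} {ξ : ℝ}

lemma hasDerivAt_energy (hs : IsPlanarSol a β c v u ω) (hξ : ξ ∈ existenceInterval ω) :
    HasDerivAt (energy a β v u) (β * c * u ξ ^ 2) ξ := by
  have hv := (hasDerivAt_cubicPotential a (v ξ)).comp ξ (hs ξ hξ).1
  exact (((hs ξ hξ).2.pow 2).div_const 2).add (hv.const_mul β) |>.congr_deriv (by push_cast; ring)

lemma monotoneOn_energy (hs : IsPlanarSol a β c v u ω) (hβc : 0 ≤ β * c) :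
    MonotoneOn (energy a β v u) (existenceInterval ω) :=
  monotoneOn_of_hasDerivAt_nonneg convex_existenceInterval (fun _ hξ => hs.hasDerivAt_energy hξ)
    fun _ _ => by positivity

end IsPlanarSol

/-- `48 c < 1 - 2 a` says `4 c < F(1)` for `F = cubicPotential a`. -/
structure SmallSpeed (a β c : ℝ) : Prop where
  a_pos : 0 < a
  c_pos : 0 < c
  c_lt : 48 * c < 1 - 2 * a
  β_pos : 0 < β
  β_le_two : β ≤ 2

namespace SmallSpeed

variable {a β c : ℝ}

lemma a_lt_half (P : SmallSpeed a β c) : a < 1 / 2 := by linarith [P.c_pos, P.c_lt]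

lemma βc_pos (P : SmallSpeed a β c) : 0 < β * c := mul_pos P.β_pos P.c_pos

end SmallSpeed

structure IsUnstableSeparatrix (a β c : ℝ) (v u : ℝ → ℝ) (ω : EReal) : Prop where
  sol : IsPlanarSol a β c v u ω
  maximal : IsPlanarMaximal a β c v u ω
  tendsto_v : Tendsto v atBot (𝓝 0)
  tendsto_u : Tendsto u atBot (𝓝 0)
  eventually_u_pos : ∃ M, ∀ ξ < M, 0 < u ξ

def IsFirstZero (u : ℝ → ℝ) (ξs : ℝ) : Prop := u ξs = 0 ∧ ∀ η < ξs, 0 < u η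

namespace IsUnstableSeparatrix

variable {a β c : ℝ} {v u : ℝ → ℝ} {ω : EReal} {ξ ξs : ℝ}

lemma tendsto_energy (H : IsUnstableSeparatrix a β c v u ω) :
    Tendsto (energy a β v u) atBot (𝓝 0) := by
  show Tendsto (fun ξ => u ξ ^ 2 / 2 + β * cubicPotential a (v ξ)) atBot (𝓝 0)
  simpa using ((H.tendsto_u.pow 2).div_const 2).add
    ((((continuous_cubicPotential a).tendsto 0).comp H.tendsto_v).const_mul β)

lemma energy_nonneg (H : IsUnstableSeparatrix a β c v u ω) (hβc : 0 ≤ β * c)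
    (hξ : ξ ∈ existenceInterval ω) : 0 ≤ energy a β v u ξ :=
  le_of_tendsto H.tendsto_energy <| eventually_atBot.2
    ⟨ξ, fun _ hη => H.sol.monotoneOn_energy hβc (mem_existenceInterval_of_le hξ hη) hξ hη⟩

lemma energy_pos (H : IsUnstableSeparatrix a β c v u ω) (hβc : 0 < β * c)
    (hξ : ξ ∈ existenceInterval ω) : 0 < energy a β v u ξ := by
  obtain ⟨M, hM⟩ := H.eventually_u_pos
  set m := min ξ M
  have hm : m ∈ existenceInterval ω := mem_existenceInterval_of_le hξ (min_le_left _ _)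
  have hstrict : StrictMonoOn (energy a β v u) (Icc (m - 1) m) :=
    strictMonoOn_of_hasDerivAt_pos (convex_Icc _ _)
      (fun η hη => H.sol.hasDerivAt_energy (mem_existenceInterval_of_le hm hη.2))
      fun η hη => by
        rw [interior_Icc] at hη
        have := hM η (hη.2.trans_le (min_le_right _ _))
        positivity
  calc 0 ≤ energy a β v u (m - 1) :=
        H.energy_nonneg hβc.le (mem_existenceInterval_of_le hm (by linarith))
    _ < energy a β v u m := hstrict ⟨le_rfl, by linarith⟩ ⟨by linarith, le_rfl⟩ (by linarith)
    _ ≤ energy a β v u ξ := H.sol.monotoneOn_energy hβc.le hm hξ (min_le_left _ _)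

lemma v_nonneg (H : IsUnstableSeparatrix a β c v u ω) (hξ : ξ ∈ existenceInterval ω)
    (hu : ∀ η ≤ ξ, 0 ≤ u η) : 0 ≤ v ξ := by
  have hmono : MonotoneOn v (Iic ξ) :=
    monotoneOn_of_hasDerivAt_nonneg (convex_Iic ξ)
      (fun η hη => (H.sol η (mem_existenceInterval_of_le hξ hη)).1)
      fun η hη => hu η (mem_Iic.1 (interior_subset hη))
  exact le_of_tendsto H.tendsto_v <| eventually_atBot.2
    ⟨ξ, fun η hη => hmono hη self_mem_Iic hη⟩

/-- Along the rising branch the Lyapunov function `energy - K β c v` decreases, and it vanishes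
at `-∞`. -/
lemma energy_le_mul_v (H : IsUnstableSeparatrix a β c v u ω) (hβc : 0 ≤ β * c) {K : ℝ}
    (hξ : ξ ∈ existenceInterval ω) (hu : ∀ η ≤ ξ, 0 ≤ u η) (hK : ∀ η < ξ, u η ≤ K) :
    energy a β v u ξ ≤ K * β * c * v ξ := by
  set W := fun η => energy a β v u η - K * β * c * v η
  have hanti : AntitoneOn W (Iic ξ) :=
    antitoneOn_of_hasDerivAt_nonpos (convex_Iic ξ)
      (fun η hη => (H.sol.hasDerivAt_energy (mem_existenceInterval_of_le hξ hη)).sub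
        ((H.sol η (mem_existenceInterval_of_le hξ hη)).1.const_mul (K * β * c)))
      fun η hη => by
        rw [interior_Iic] at hη
        have : β * c * u η ^ 2 - K * β * c * u η = β * c * u η * (u η - K) := by ring
        rw [this]
        exact mul_nonpos_of_nonneg_of_nonpos (mul_nonneg hβc (hu η hη.le))
          (sub_nonpos.2 (hK η hη))
  have hW : Tendsto W atBot (𝓝 0) := by
    simpa using H.tendsto_energy.sub (H.tendsto_v.const_mul (K * β * c))
  have := ge_of_tendsto hW <| eventually_atBot.2 ⟨ξ, fun η hη => hanti hη self_mem_Iic hη⟩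
  simp only [W] at this
  linarith

/-- At a first exit through `v = 1` or `u = 4` the energy would exceed the bound `4 β c v` of
`energy_le_mul_v`. -/
lemma v_lt_one_and_u_lt_four (H : IsUnstableSeparatrix a β c v u ω) (P : SmallSpeed a β c)
    (hξ : ξ ∈ existenceInterval ω) (hu : ∀ η ≤ ξ, 0 ≤ u η) : v ξ < 1 ∧ u ξ < 4 := by
  by_contra hbad
  obtain ⟨s, hs⟩ := eventually_atBot.1 ((H.tendsto_v.eventually (gt_mem_nhds one_pos)).and
    (H.tendsto_u.eventually (gt_mem_nhds (by norm_num : (0 : ℝ) < 4))))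
  set g := fun η => min (1 - v η) (4 - u η)
  have hvc : ContinuousOn v (Icc (min s ξ) ξ) :=
    HasDerivAt.continuousOn fun η hη => (H.sol η (mem_existenceInterval_of_le hξ hη.2)).1
  have huc : ContinuousOn u (Icc (min s ξ) ξ) :=
    HasDerivAt.continuousOn fun η hη => (H.sol η (mem_existenceInterval_of_le hξ hη.2)).2
  have hcont : ContinuousOn g (Icc (min s ξ) ξ) :=
    (continuousOn_const.sub hvc).inf (continuousOn_const.sub huc)
  obtain ⟨ξb, ⟨hsξb, hξbξ⟩, hgb, hbefore⟩ := exists_first_zero (min_le_right s ξ) hcont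
    (by have := hs _ (min_le_left s ξ); simp only [g]; exact lt_min (by linarith) (by linarith))
    (by
      simp only [g, not_and_or, not_lt] at hbad ⊢
      rcases hbad with h | h
      · exact min_le_of_left_le (by linarith)
      · exact min_le_of_right_le (by linarith))
  have hξb : ξb ∈ existenceInterval ω := mem_existenceInterval_of_le hξ hξbξ
  have hprior : ∀ η < ξb, u η ≤ 4 := fun η hη => by
    rcases le_or_gt η (min s ξ) with h | h
    · exact (hs η (h.trans (min_le_left _ _))).2.le
    · have := hbefore η ⟨h.le, hη⟩
      simp only [g, lt_min_iff] at this
      linarith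
  have hub : ∀ η ≤ ξb, 0 ≤ u η := fun η hη => hu η (hη.trans hξbξ)
  have hE := H.energy_le_mul_v P.βc_pos.le hξb hub hprior
  have hv0 := H.v_nonneg hξb hub
  have hβ := P.β_pos
  have hc := P.c_pos
  have hc48 := P.c_lt
  rcases min_eq_iff.1 hgb with ⟨hv1, hle⟩ | ⟨hu4, hle⟩
  · have hv : v ξb = 1 := by linarith
    have : β * ((1 - 2 * a) / 12) ≤ energy a β v u ξb := by
      rw [energy, hv, cubicPotential_one]; nlinarith [sq_nonneg (u ξb)]
    rw [hv] at hE
    nlinarith [mul_lt_mul_of_pos_left hc48 hβ]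
  · have hu4' : u ξb = 4 := by linarith
    have hF := neg_one_le_cubicPotential P.a_pos.le (by linarith [P.a_lt_half]) hv0
      (show v ξb ≤ 1 by linarith)
    have : 8 - β ≤ energy a β v u ξb := by rw [energy, hu4']; nlinarith
    have : 4 * β * c * v ξb ≤ 4 * β * c := by
      nlinarith [mul_le_mul_of_nonneg_left (show v ξb ≤ 1 by linarith) P.βc_pos.le]
    nlinarith [mul_le_mul_of_nonneg_right P.β_le_two hc.le, P.a_pos]

lemma energy_le_four_mul (H : IsUnstableSeparatrix a β c v u ω) (P : SmallSpeed a β c)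
    (hξ : ξ ∈ existenceInterval ω) (hu : ∀ η ≤ ξ, 0 ≤ u η) :
    energy a β v u ξ ≤ 4 * β * c := by
  have hE := H.energy_le_mul_v P.βc_pos.le hξ hu fun η hη =>
    (H.v_lt_one_and_u_lt_four P (mem_existenceInterval_of_le hξ hη.le) fun ζ hζ =>
      hu ζ (hζ.trans hη.le)).2.le
  have hv1 := (H.v_lt_one_and_u_lt_four P hξ hu).1
  nlinarith [P.βc_pos]

lemma v_le_one_sub (H : IsUnstableSeparatrix a β c v u ω) (P : SmallSpeed a β c)
    (hξ : ξ ∈ existenceInterval ω) (hu : ∀ η ≤ ξ, 0 ≤ u η) :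
    v ξ ≤ 1 - ((1 - 2 * a) / 12 - 4 * c) := by
  have hE := H.energy_le_four_mul P hξ hu
  have hF : cubicPotential a (v ξ) ≤ 4 * c := by
    rw [energy] at hE; nlinarith [sq_nonneg (u ξ), P.β_pos]
  have := cubicPotential_one_sub_le P.a_pos.le (H.v_nonneg hξ hu)
    (H.v_lt_one_and_u_lt_four P hξ hu).1.le
  rw [cubicPotential_one] at this
  linarith

/-- Once `v` exceeds `a`, `v_le_one_sub` keeps the cubic above a positive constant, so
`u - β c v`, whose derivative is `-β v (v - a) (1 - v)`, decreases linearly; yet it stays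
above `-β c`. -/
lemma false_of_forall_u_pos_of_a_lt_v (H : IsUnstableSeparatrix a β c v u ω)
    (P : SmallSpeed a β c) (hT : ω = ⊤) (hpos : ∀ ξ, 0 < u ξ) {ξF : ℝ} (hξF : a < v ξF) :
    False := by
  have hall : ∀ ξ, ξ ∈ existenceInterval ω := fun ξ => by simp [existenceInterval, hT]
  have hu : ∀ ξ, ∀ η ≤ ξ, 0 ≤ u η := fun _ η _ => (hpos η).le
  set δ := (1 - 2 * a) / 12 - 4 * c with hδ_def
  have hδ : 0 < δ := by linarith [P.c_lt]
  have hvmono : Monotone v := monotone_of_hasDerivAt_nonneg (fun ξ => (H.sol ξ (hall ξ)).1)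
    fun ξ => (hpos ξ).le
  set μ := v ξF * (v ξF - a) * δ
  have hμ : 0 < μ := mul_pos (mul_pos (P.a_pos.trans hξF) (sub_pos.2 hξF)) hδ
  have hcubic : ∀ ξ, ξF ≤ ξ → μ ≤ v ξ * (v ξ - a) * (1 - v ξ) := fun ξ hξ => by
    have h1 := hvmono hξ
    exact mul_le_mul (mul_le_mul h1 (by linarith) (sub_pos.2 hξF).le (by linarith [P.a_pos]))
      (by linarith [H.v_le_one_sub P (hall ξ) (hu ξ)]) hδ.le
      (mul_nonneg (by linarith [P.a_pos]) (by linarith))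
  obtain ⟨ξ, -, hξ⟩ := exists_lt_of_hasDerivAt_le_neg (f := fun ξ => u ξ - β * c * v ξ)
    (mul_pos P.β_pos hμ)
    (fun ξ _ => (H.sol ξ (hall ξ)).2.sub ((H.sol ξ (hall ξ)).1.const_mul (β * c)))
    (fun ξ hξ => by nlinarith [hcubic ξ hξ, P.β_pos]) (-(β * c))
  nlinarith [hpos ξ, (H.v_lt_one_and_u_lt_four P (hall ξ) (hu ξ)).1, P.βc_pos]

/-- If `v` never exceeds `a`, the potential term is nonpositive, so `u ^ 2 / 2` stays above the
positive energy at time `0` and `v` grows without bound. -/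
lemma false_of_forall_u_pos_of_v_le_a (H : IsUnstableSeparatrix a β c v u ω)
    (P : SmallSpeed a β c) (hT : ω = ⊤) (hpos : ∀ ξ, 0 < u ξ) (hva : ∀ ξ, v ξ ≤ a) : False := by
  have hall : ∀ ξ, ξ ∈ existenceInterval ω := fun ξ => by simp [existenceInterval, hT]
  have hE0 := H.energy_pos P.βc_pos (hall 0)
  have hud : ∀ ξ, 0 ≤ ξ → energy a β v u 0 / 2 ≤ u ξ := fun ξ hξ => by
    have hE : energy a β v u 0 ≤ u ξ ^ 2 / 2 + β * cubicPotential a (v ξ) :=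
      H.sol.monotoneOn_energy P.βc_pos.le (hall 0) (hall ξ) hξ
    have hF := cubicPotential_nonpos P.a_pos.le (by linarith [P.a_lt_half]) (hva ξ)
    have h4 := (H.v_lt_one_and_u_lt_four P (hall ξ) fun η _ => (hpos η).le).2
    nlinarith [P.β_pos, hpos ξ]
  obtain ⟨ξ, -, hξ⟩ := exists_lt_of_hasDerivAt_le_neg (f := fun ξ => -v ξ) (half_pos hE0)
    (fun ξ _ => (H.sol ξ (hall ξ)).1.neg) (fun ξ hξ => neg_le_neg (hud ξ hξ)) (-a)
  linarith [hva ξ]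

lemma exists_u_nonpos (H : IsUnstableSeparatrix a β c v u ω) (P : SmallSpeed a β c)
    (hω : 0 < ω) : ∃ ξ ∈ existenceInterval ω, u ξ ≤ 0 := by
  by_contra! hpos
  have hu : ∀ ξ ∈ existenceInterval ω, ∀ η ≤ ξ, 0 ≤ u η := fun ξ hξ η hη =>
    (hpos η (mem_existenceInterval_of_le hξ hη)).le
  have hT : ω = ⊤ := H.maximal.eq_top_of_abs_le H.sol (s := 0) (R := 1)
    (by simpa [existenceInterval] using hω) fun ξ hξ _ =>
      abs_le.2 ⟨by linarith [H.v_nonneg hξ (hu ξ hξ)],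
        (H.v_lt_one_and_u_lt_four P hξ (hu ξ hξ)).1.le⟩
  have hpos' : ∀ ξ, 0 < u ξ := fun ξ => hpos ξ (by simp [existenceInterval, hT])
  by_cases hva : ∃ ξF, a < v ξF
  · obtain ⟨ξF, hξF⟩ := hva
    exact H.false_of_forall_u_pos_of_a_lt_v P hT hpos' hξF
  · simp only [not_exists, not_lt] at hva
    exact H.false_of_forall_u_pos_of_v_le_a P hT hpos' hva

lemma exists_first_zero_u (H : IsUnstableSeparatrix a β c v u ω) (P : SmallSpeed a β c)
    (hω : 0 < ω) : ∃ ξs ∈ existenceInterval ω, u ξs = 0 ∧ ∀ η < ξs, 0 < u η := by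
  obtain ⟨ξ₁, hξ₁, hu₁⟩ := H.exists_u_nonpos P hω
  obtain ⟨M, hM⟩ := H.eventually_u_pos
  set s := min (M - 1) ξ₁
  obtain ⟨ξs, ⟨hsξs, hξsξ₁⟩, hu0, hbefore⟩ := exists_first_zero (min_le_right _ _)
    (HasDerivAt.continuousOn fun η hη => (H.sol η (mem_existenceInterval_of_le hξ₁ hη.2)).2)
    (hM s (by linarith [min_le_left (M - 1) ξ₁])) hu₁
  refine ⟨ξs, mem_existenceInterval_of_le hξ₁ hξsξ₁, hu0, fun η hη => ?_⟩
  rcases lt_or_ge η s with h | h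
  · exact hM η (by linarith [min_le_left (M - 1) ξ₁])
  · exact hbefore η ⟨h, hη⟩

lemma a_lt_v_of_u_eq_zero (H : IsUnstableSeparatrix a β c v u ω) (P : SmallSpeed a β c)
    (hξ : ξ ∈ existenceInterval ω) (hu0 : u ξ = 0) : a < v ξ := by
  by_contra! h
  have hE := H.energy_pos P.βc_pos hξ
  rw [energy, hu0] at hE
  nlinarith [cubicPotential_nonpos P.a_pos.le (by linarith [P.a_lt_half]) h, P.β_pos]

lemma v_lt_one_of_isFirstZero (H : IsUnstableSeparatrix a β c v u ω) (P : SmallSpeed a β c)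
    (hξs : ξs ∈ existenceInterval ω) (hs : IsFirstZero u ξs) : v ξs < 1 :=
  (H.v_lt_one_and_u_lt_four P hξs fun η hη =>
    hη.lt_or_eq.elim (fun h => (hs.2 η h).le) fun h => h ▸ hs.1.ge).1

/-- At a zero of `u` with `a < v < 1` the vector field points into `u < 0`; along an arc with
`u < 0` the value of `v` decreases and the energy increases, so every later zero of `u` would
again have `a < v < 1`. -/
lemma u_neg_of_isFirstZero (H : IsUnstableSeparatrix a β c v u ω) (P : SmallSpeed a β c)
    (hξs : ξs ∈ existenceInterval ω) (hs : IsFirstZero u ξs) (hξ : ξ ∈ existenceInterval ω)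
    (hlt : ξs < ξ) : u ξ < 0 := by
  have hv1 := H.v_lt_one_of_isFirstZero P hξs hs
  refine neg_of_hasDerivAt_neg_at_zeros (t := ξ)
    (fun η hη => (H.sol η (mem_existenceInterval_of_le hξ hη.2)).2) hs.1
    (fun x hx hux hneg => ?_) ξ ⟨hlt, le_rfl⟩
  have hxD := mem_existenceInterval_of_le hξ hx.2
  have hvx : v x ≤ v ξs := antitoneOn_of_hasDerivAt_nonpos (convex_Icc ξs x)
    (fun η hη => (H.sol η (mem_existenceInterval_of_le hxD hη.2)).1)
    (fun η hη => by rw [interior_Icc] at hη; exact (hneg η hη).le)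
    ⟨le_rfl, hx.1⟩ ⟨hx.1, le_rfl⟩ hx.1
  have hax := H.a_lt_v_of_u_eq_zero P hxD hux
  have : 0 < v x * (v x - a) * (1 - v x) :=
    mul_pos (mul_pos (P.a_pos.trans hax) (by linarith)) (by linarith)
  rw [hux]
  nlinarith [P.β_pos]

lemma antitoneOn_v_of_isFirstZero (H : IsUnstableSeparatrix a β c v u ω) (P : SmallSpeed a β c)
    (hξs : ξs ∈ existenceInterval ω) (hs : IsFirstZero u ξs) :
    AntitoneOn v (existenceInterval ω ∩ Ici ξs) :=
  antitoneOn_of_hasDerivAt_nonpos (convex_existenceInterval.inter (convex_Ici _))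
    (fun η hη => (H.sol η hη.1).1) fun η hη => by
      obtain ⟨hηD, hη⟩ := interior_subset hη
      rcases (mem_Ici.1 hη).lt_or_eq with h | h
      · exact (H.u_neg_of_isFirstZero P hξs hs hηD h).le
      · exact h ▸ hs.1.le

/-- The energy gained on `[ξs, ξ₄]` cannot be spent: `β F(v)` never exceeds its value
`energy ξs` at the turning point again, so `u ^ 2 / 2` stays above the gain. -/
lemma exists_u_le_neg (H : IsUnstableSeparatrix a β c v u ω) (P : SmallSpeed a β c)
    (hξs : ξs ∈ existenceInterval ω) (hs : IsFirstZero u ξs) :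
    ∃ ξ₄ ∈ existenceInterval ω, ξs < ξ₄ ∧ ∃ δ > 0,
      ∀ ξ ∈ existenceInterval ω, ξ₄ ≤ ξ → u ξ ≤ -δ := by
  obtain ⟨ξ₄, hsξ₄, hξ₄⟩ := EReal.lt_iff_exists_real_btwn.1 hξs
  have hsξ₄ : ξs < ξ₄ := EReal.coe_lt_coe_iff.1 hsξ₄
  have hstrict : StrictMonoOn (energy a β v u) (Icc ξs ξ₄) :=
    strictMonoOn_of_hasDerivAt_pos (convex_Icc _ _)
      (fun η hη => H.sol.hasDerivAt_energy (mem_existenceInterval_of_le hξ₄ hη.2))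
      fun η hη => by
        rw [interior_Icc] at hη
        have := H.u_neg_of_isFirstZero P hξs hs (mem_existenceInterval_of_le hξ₄ hη.2.le) hη.1
        exact mul_pos P.βc_pos (by nlinarith)
  have hgap := hstrict ⟨le_rfl, hsξ₄.le⟩ ⟨hsξ₄.le, le_rfl⟩ hsξ₄
  have hEs : energy a β v u ξs = β * cubicPotential a (v ξs) := by simp [energy, hs.1]
  have hFs : 0 ≤ cubicPotential a (v ξs) := by
    have := H.energy_pos P.βc_pos hξs
    rw [hEs] at this
    exact (pos_of_mul_pos_right this P.β_pos.le).le
  refine ⟨ξ₄, hξ₄, hsξ₄, √(2 * (energy a β v u ξ₄ - energy a β v u ξs)),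
    Real.sqrt_pos.2 (by linarith), fun ξ hξ hξ₄ξ => ?_⟩
  have huξ := H.u_neg_of_isFirstZero P hξs hs hξ (hsξ₄.trans_le hξ₄ξ)
  have hF := cubicPotential_le_of_le P.a_pos.le (by linarith [P.a_lt_half])
    (H.antitoneOn_v_of_isFirstZero P hξs hs ⟨hξs, self_mem_Ici⟩ ⟨hξ, (hsξ₄.trans_le hξ₄ξ).le⟩
      (hsξ₄.trans_le hξ₄ξ).le) (H.v_lt_one_of_isFirstZero P hξs hs).le hFs
  have hE := H.sol.monotoneOn_energy P.βc_pos.le hξ₄ hξ hξ₄ξ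
  have hEξ : energy a β v u ξ = u ξ ^ 2 / 2 + β * cubicPotential a (v ξ) := rfl
  have : √(2 * (energy a β v u ξ₄ - energy a β v u ξs)) ≤ -u ξ :=
    (Real.sqrt_le_left (by linarith)).2 (by nlinarith [P.β_pos])
  linarith

lemma v_unbounded_below (H : IsUnstableSeparatrix a β c v u ω) (P : SmallSpeed a β c)
    (hξs : ξs ∈ existenceInterval ω) (hs : IsFirstZero u ξs) {ξ₄ δ : ℝ}
    (hξ₄ : ξ₄ ∈ existenceInterval ω) (hsξ₄ : ξs < ξ₄) (hδ : 0 < δ)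
    (hu : ∀ ξ ∈ existenceInterval ω, ξ₄ ≤ ξ → u ξ ≤ -δ) (B : ℝ) :
    ∃ ξ ∈ existenceInterval ω, ξ₄ ≤ ξ ∧ v ξ ≤ B := by
  by_contra! hB
  have hvs : ∀ ξ ∈ existenceInterval ω, ξ₄ ≤ ξ → v ξ ≤ 1 := fun ξ hξ h =>
    ((H.antitoneOn_v_of_isFirstZero P hξs hs) ⟨hξs, self_mem_Ici⟩ ⟨hξ, (hsξ₄.le.trans h)⟩
      (hsξ₄.le.trans h)).trans (H.v_lt_one_of_isFirstZero P hξs hs).le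
  have hT : ω = ⊤ := H.maximal.eq_top_of_abs_le H.sol hξ₄ (R := max |B| 1) fun ξ hξ h =>
    abs_le.2 ⟨by linarith [neg_abs_le B, le_max_left |B| 1, hB ξ hξ h],
      (hvs ξ hξ h).trans (le_max_right _ _)⟩
  have hall : ∀ ξ, ξ ∈ existenceInterval ω := fun ξ => by simp [existenceInterval, hT]
  obtain ⟨ξ, hξ₄ξ, hξ⟩ := exists_lt_of_hasDerivAt_le_neg hδ (fun ξ _ => (H.sol ξ (hall ξ)).1)
    (fun ξ h => hu ξ (hall ξ) h) B
  exact (hB ξ (hall ξ) hξ₄ξ).not_gt hξ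

lemma u_deriv_le_neg_two_mul (H : IsUnstableSeparatrix a β c v u ω) (P : SmallSpeed a β c)
    (hξs : ξs ∈ existenceInterval ω) (hs : IsFirstZero u ξs) (hξ : ξ ∈ existenceInterval ω)
    (hlt : ξs < ξ) (hv : v ξ ≤ -1) :
    β * (c * u ξ - v ξ * (v ξ - a) * (1 - v ξ)) ≤ -2 * β := by
  have hu := H.u_neg_of_isFirstZero P hξs hs hξ hlt
  have hf := two_le_cubic P.a_pos.le hv
  nlinarith [mul_le_mul_of_nonneg_left hf P.β_pos.le,
    mul_nonpos_of_nonneg_of_nonpos P.βc_pos.le hu.le]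

/-- Once `v ≤ -1`, `u' ≤ -2 β`, so a lower bound on `u` would bound the remaining lifetime
and with it the descent of `v`. -/
lemma tendsto_u_atBot (H : IsUnstableSeparatrix a β c v u ω) (P : SmallSpeed a β c)
    (hξs : ξs ∈ existenceInterval ω) (hs : IsFirstZero u ξs) {ξ₅ : ℝ}
    (hξ₅ : ξ₅ ∈ existenceInterval ω) (hsξ₅ : ξs < ξ₅)
    (hv : ∀ ξ ∈ existenceInterval ω, ξ₅ ≤ ξ → v ξ ≤ -1)
    (hvunb : ∀ B, ∃ ξ ∈ existenceInterval ω, ξ₅ ≤ ξ ∧ v ξ ≤ B) :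
    Tendsto u (approachFromLeft ω) atBot := by
  have hD : Convex ℝ (existenceInterval ω ∩ Ici ξ₅) :=
    convex_existenceInterval.inter (convex_Ici _)
  have hdu : ∀ ξ ∈ existenceInterval ω ∩ Ici ξ₅,
      HasDerivAt u (β * (c * u ξ - v ξ * (v ξ - a) * (1 - v ξ))) ξ :=
    fun ξ hξ => (H.sol ξ hξ.1).2
  have hdu_le : ∀ ξ ∈ interior (existenceInterval ω ∩ Ici ξ₅),
      β * (c * u ξ - v ξ * (v ξ - a) * (1 - v ξ)) ≤ -2 * β := fun ξ hξ =>
    have hξ' := interior_subset hξ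
    H.u_deriv_le_neg_two_mul P hξs hs hξ'.1 (hsξ₅.trans_le hξ'.2) (hv ξ hξ'.1 hξ'.2)
  refine tendsto_approachFromLeft_atBot_of_antitoneOn
    (antitoneOn_of_hasDerivAt_nonpos hD hdu fun ξ hξ => (hdu_le ξ hξ).trans
      (by linarith [P.β_pos])) fun B => ?_
  by_contra! hB
  have hBneg : B < 0 := (hB ξ₅ hξ₅ le_rfl).trans (H.u_neg_of_isFirstZero P hξs hs hξ₅ hsξ₅)
  set T := (u ξ₅ - B) / (2 * β) with hT_def
  have hlife : ∀ ξ ∈ existenceInterval ω, ξ₅ ≤ ξ → ξ - ξ₅ ≤ T := fun ξ hξ h => by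
    have := image_sub_le_mul_sub_of_hasDerivAt_le hD hdu hdu_le ⟨hξ₅, self_mem_Ici⟩ ⟨hξ, h⟩ h
    rw [hT_def, le_div_iff₀ (by linarith [P.β_pos])]
    nlinarith [hB ξ hξ h]
  obtain ⟨ξ, hξ, h, hvξ⟩ := hvunb (v ξ₅ + B * T - 1)
  have := mul_sub_le_image_sub_of_le_hasDerivAt hD (fun ξ hξ => (H.sol ξ hξ.1).1) (C := B)
    (fun ξ hξ => (hB ξ (interior_subset hξ).1 (interior_subset hξ).2).le)
    ⟨hξ₅, self_mem_Ici⟩ ⟨hξ, h⟩ h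
  nlinarith [hlife ξ hξ h]

theorem tendsto_atBot (H : IsUnstableSeparatrix a β c v u ω) (P : SmallSpeed a β c)
    (hω : 0 < ω) :
    Tendsto v (approachFromLeft ω) atBot ∧ Tendsto u (approachFromLeft ω) atBot := by
  obtain ⟨ξs, hξs, hs⟩ := H.exists_first_zero_u P hω
  have hanti := H.antitoneOn_v_of_isFirstZero P hξs hs
  obtain ⟨ξ₄, hξ₄, hsξ₄, δ, hδ, huδ⟩ := H.exists_u_le_neg P hξs hs
  have hvunb := H.v_unbounded_below P hξs hs hξ₄ hsξ₄ hδ huδ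
  obtain ⟨ξ₅, hξ₅, hξ₄₅, hv₅⟩ := hvunb (-1)
  have hanti₅ : ∀ ξ ∈ existenceInterval ω, ξ₅ ≤ ξ → v ξ ≤ v ξ₅ := fun ξ hξ h =>
    hanti ⟨hξ₅, (hsξ₄.trans_le hξ₄₅).le⟩ ⟨hξ, (hsξ₄.trans_le (hξ₄₅.trans h)).le⟩ h
  refine ⟨tendsto_approachFromLeft_atBot_of_antitoneOn
    (hanti.mono (inter_subset_inter_right _ (Ici_subset_Ici.2 hsξ₄.le))) hvunb,
    H.tendsto_u_atBot P hξs hs hξ₅ (hsξ₄.trans_le hξ₄₅)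
      (fun ξ hξ h => (hanti₅ ξ hξ h).trans hv₅) fun B => ?_⟩
  obtain ⟨ξ, hξ, h₄, hvB⟩ := hvunb B
  rcases le_total ξ ξ₅ with h | h
  · exact ⟨ξ₅, hξ₅, le_rfl, (hanti ⟨hξ, (hsξ₄.trans_le h₄).le⟩
      ⟨hξ₅, (hsξ₄.trans_le hξ₄₅).le⟩ h).trans hvB⟩
  · exact ⟨ξ, hξ, h, hvB⟩

end IsUnstableSeparatrix

theorem separatrix_escapes_to_minus_infinity_general
    (a τ : ℝ) (ha0 : 0 < a) (ha1 : a < 1 / 2) :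
    ∃ c₀ > (0 : ℝ), ∀ c : ℝ, 0 < c → c < c₀ → τ * c ^ 2 < 1 →
      ∀ β : ℝ, β = 1 / (1 - τ * c ^ 2) →
      ∀ (v u : ℝ → ℝ) (ω : EReal), 0 < ω →
        IsPlanarSol a β c v u ω →
        IsPlanarMaximal a β c v u ω →
        Tendsto v atBot (nhds 0) → Tendsto u atBot (nhds 0) →
        (∃ M : ℝ, ∀ ξ : ℝ, ξ < M → 0 < u ξ) →
        Tendsto v (approachFromLeft ω) atBot ∧
        Tendsto u (approachFromLeft ω) atBot := by
  refine ⟨min ((1 - 2 * a) / 48) (1 / (2 * |τ| + 1)), lt_min (by linarith) (by positivity), ?_⟩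
  intro c hc hcc₀ _ β hβ v u ω hω hsol hmax hv hu hupos
  have hc48 : 48 * c < 1 - 2 * a := by linarith [hcc₀.trans_le (min_le_left _ _)]
  have hcτ : c * (2 * |τ| + 1) < 1 :=
    (lt_div_iff₀ (by positivity)).1 (by simpa using hcc₀.trans_le (min_le_right _ _))
  have hτc2 : τ * c ^ 2 ≤ 1 / 2 := by
    nlinarith [le_abs_self τ, abs_nonneg τ, mul_le_mul_of_nonneg_left (le_abs_self τ) (sq_nonneg c)]
  have P : SmallSpeed a β c :=
    { a_pos := ha0, c_pos := hc, c_lt := hc48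
      β_pos := hβ ▸ one_div_pos.2 (by linarith)
      β_le_two := by rw [hβ, div_le_iff₀ (by linarith)]; linarith }
  exact (IsUnstableSeparatrix.mk hsol hmax hv hu hupos).tendsto_atBot P hω

theorem separatrix_escapes_to_minus_infinity
    (a τ : ℝ) (ha0 : 0 < a) (ha1 : a < 1 / 2) (hτ : 0 < τ) :
    ∃ c₀ > (0 : ℝ), ∀ c : ℝ, 0 < c → c < c₀ → τ * c ^ 2 < 1 →
      ∀ β : ℝ, β = 1 / (1 - τ * c ^ 2) →
      ∀ (v u : ℝ → ℝ) (ω : EReal), 0 < ω →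
        IsPlanarSol a β c v u ω →
        IsPlanarMaximal a β c v u ω →
        Tendsto v atBot (nhds 0) → Tendsto u atBot (nhds 0) →
        (∃ M : ℝ, ∀ ξ : ℝ, ξ < M → 0 < u ξ) →
        Tendsto v (approachFromLeft ω) atBot ∧
        Tendsto u (approachFromLeft ω) atBot :=
  separatrix_escapes_to_minus_infinity_general a τ ha0 ha1
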